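/- gcd((2^37780 + 1) mod (5^9445 - 1), 5^9445 - 1) = 151121. Consequently, no integer of the form 151121 · p with p a prime greater than 151121 is a strong pseudoprime simultaneously to the bases 2, 3, and 5. -/

import Mathlib

/-!
Let `n = k p` with `k = 151121` and `n - 1 = 2^s d`, `d` odd. If `n` passes the Miller–Rabin test
to base `a`, then the 2-adic valuation of the multiplicative order of `a` is the same modulo every
prime factor of `n` (Bleichenbacher). Modulo `p` that order also divides `gcd(n - 1, p - 1)`, which
divides `k - 1 = 2^4 · 9445`. Modulo `k` the order of `5` is odd and the order of `2` has valuation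
`3`, so modulo `p` we get `5^9445 = 1` and `2^(4 · 9445) = -1`. Hence `p` divides the gcd, which
is `k` itself, contradicting `p > k`.
-/

namespace Nat

theorem dvd_pow_mul_of_factorization_le {q o t v m : ℕ} (hq : q.Prime) (hm : m ≠ 0)
    (h : o ∣ q ^ t * m) (hv : o.factorization q ≤ v) : o ∣ q ^ v * m := by
  have hqt : q ^ t * m ≠ 0 := mul_ne_zero (pow_ne_zero _ hq.ne_zero) hm
  have ho : o ≠ 0 := ne_zero_of_dvd_ne_zero hqt h
  rw [← factorization_le_iff_dvd ho (mul_ne_zero (pow_ne_zero _ hq.ne_zero) hm)]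
  intro r
  have hr := (factorization_le_iff_dvd ho hqt).mpr h r
  simp only [factorization_mul (pow_ne_zero _ hq.ne_zero) hm, hq.factorization_pow,
    Finsupp.add_apply, Finsupp.single_apply] at hr ⊢
  split_ifs at hr ⊢ with hqr
  · subst hqr; omega
  · omega

theorem factorization_two_le_of_dvd_two_pow_mul {o j m : ℕ} (hm : Odd m) (h : o ∣ 2 ^ j * m) :
    o.factorization 2 ≤ j := by
  have hN : 2 ^ j * m ≠ 0 := mul_ne_zero (pow_ne_zero _ two_ne_zero) hm.pos.ne'
  have := (factorization_le_iff_dvd (ne_zero_of_dvd_ne_zero hN h) hN).mpr h 2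
  rwa [factorization_mul (pow_ne_zero _ two_ne_zero) hm.pos.ne', prime_two.factorization_pow,
    Finsupp.add_apply, factorization_eq_zero_of_not_dvd hm.not_two_dvd_nat,
    Finsupp.single_eq_same, add_zero] at this

theorem dvd_sub_one_of_dvd_mul_sub_one {q k p : ℕ} (hp : 1 ≤ p) (hk : 1 ≤ k)
    (h : q ∣ k * p - 1) (h' : q ∣ p - 1) : q ∣ k - 1 := by
  have hsplit : k * p - 1 = k * (p - 1) + (k - 1) := by
    have hkp : k ≤ k * p := Nat.le_mul_of_pos_right k hp
    zify [hp, hk, hk.trans hkp]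
    ring
  rw [hsplit] at h
  exact (Nat.dvd_add_right (h'.mul_left k)).mp h

end Nat

theorem factorization_orderOf_of_pow_eq_one {G : Type*} [Monoid G] {x : G} {d : ℕ} (hd : Odd d)
    (hx : x ^ d = 1) : (orderOf x).factorization 2 = 0 :=
  Nat.factorization_eq_zero_of_not_dvd
    (hd.of_dvd_nat (orderOf_dvd_of_pow_eq_one hx)).not_two_dvd_nat

section OrderOf

variable {R : Type*} [Ring R] {x : R} {j d : ℕ}

theorem factorization_orderOf_of_pow_eq_neg_one (hR : (-1 : R) ≠ 1) (hd : Odd d)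
    (hx : x ^ (2 ^ j * d) = -1) : (orderOf x).factorization 2 = j + 1 := by
  have hsq : x ^ (2 ^ (j + 1) * d) = 1 := by
    rw [pow_succ, mul_right_comm, pow_mul, hx, neg_one_sq]
  have hdvd := orderOf_dvd_of_pow_eq_one hsq
  refine (Nat.factorization_two_le_of_dvd_two_pow_mul hd hdvd).antisymm
    (not_lt.mp fun hlt => hR ?_)
  rw [← hx]
  exact orderOf_dvd_iff_pow_eq_one.mp
    (Nat.dvd_pow_mul_of_factorization_le Nat.prime_two hd.pos.ne' hdvd (Nat.lt_succ_iff.mp hlt))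

theorem pow_eq_neg_one_of_factorization_orderOf [NoZeroDivisors R] (hd : Odd d)
    (hx : orderOf x ∣ 2 ^ (j + 1) * d) (hv : (orderOf x).factorization 2 = j + 1) :
    x ^ (2 ^ j * d) = -1 := by
  have hsq : x ^ (2 ^ j * d) * x ^ (2 ^ j * d) = 1 := by
    rw [← pow_add, ← two_mul, ← mul_assoc, ← pow_succ']
    exact orderOf_dvd_iff_pow_eq_one.mp hx
  refine (mul_self_eq_one_iff.mp hsq).resolve_left fun h1 => ?_
  have := Nat.factorization_two_le_of_dvd_two_pow_mul hd (orderOf_dvd_of_pow_eq_one h1)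
  omega

end OrderOf

section MillerRabin

variable {R S T : Type*} [Ring R] [Ring S] [Ring T]

/-- For `x = a mod n` and `n - 1 = 2^s d` with `d` odd, this says that `n` is a strong probable
prime to base `a`. -/
def PassesMillerRabin (x : R) (s d : ℕ) : Prop :=
  x ^ d = 1 ∨ ∃ k < s, x ^ (2 ^ k * d) = -1

variable {x : R} {s d : ℕ}

theorem PassesMillerRabin.map (h : PassesMillerRabin x s d) (f : R →+* S) :
    PassesMillerRabin (f x) s d := by
  rcases h with h | ⟨k, hk, h⟩
  · exact Or.inl (by rw [← map_pow, h, map_one])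
  · exact Or.inr ⟨k, hk, by rw [← map_pow, h, map_neg, map_one]⟩

theorem PassesMillerRabin.pow_eq_one (h : PassesMillerRabin x s d) : x ^ (2 ^ s * d) = 1 := by
  rcases h with h | ⟨k, hk, h⟩
  · rw [mul_comm, pow_mul, h, one_pow]
  · obtain ⟨i, rfl⟩ := exists_add_of_le (Nat.succ_le_of_lt hk)
    rw [show 2 ^ (k + 1 + i) * d = 2 ^ k * d * 2 * 2 ^ i by ring, pow_mul, pow_mul, h, neg_one_sq,
      one_pow]

theorem PassesMillerRabin.factorization_orderOf_eq (h : PassesMillerRabin x s d) (hd : Odd d)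
    (f : R →+* S) (g : R →+* T) (hS : (-1 : S) ≠ 1) (hT : (-1 : T) ≠ 1) :
    (orderOf (f x)).factorization 2 = (orderOf (g x)).factorization 2 := by
  rcases h with h | ⟨k, -, h⟩
  · rw [factorization_orderOf_of_pow_eq_one hd (by rw [← map_pow, h, map_one]),
      factorization_orderOf_of_pow_eq_one hd (by rw [← map_pow, h, map_one])]
  · rw [factorization_orderOf_of_pow_eq_neg_one hS hd (by rw [← map_pow, h, map_neg, map_one]),
      factorization_orderOf_of_pow_eq_neg_one hT hd (by rw [← map_pow, h, map_neg, map_one])]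

end MillerRabin

theorem PassesMillerRabin.factorization_orderOf_zmod_eq {n k p a s d : ℕ} [Fact (2 < k)]
    [Fact (2 < p)] (hk : k ∣ n) (hp : p ∣ n) (h : PassesMillerRabin (a : ZMod n) s d)
    (hd : Odd d) :
    (orderOf (a : ZMod p)).factorization 2 = (orderOf (a : ZMod k)).factorization 2 := by
  simpa only [map_natCast] using h.factorization_orderOf_eq hd (ZMod.castHom hp (ZMod p))
    (ZMod.castHom hk (ZMod k)) ZMod.neg_one_ne_one ZMod.neg_one_ne_one

theorem orderOf_dvd_sub_one_of_pow_mul_sub_one_eq_one {k p a : ℕ} [Fact p.Prime] (hk : 1 ≤ k)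
    (hpa : ¬p ∣ a) (h : (a : ZMod (k * p)) ^ (k * p - 1) = 1) :
    orderOf (a : ZMod p) ∣ k - 1 := by
  have hN : orderOf (a : ZMod p) ∣ k * p - 1 := by
    refine orderOf_dvd_of_pow_eq_one ?_
    simpa using congrArg (ZMod.castHom (dvd_mul_left p k) (ZMod p)) h
  have hp1 : orderOf (a : ZMod p) ∣ p - 1 :=
    ZMod.orderOf_dvd_card_sub_one (by rwa [Ne, ZMod.natCast_eq_zero_iff])
  exact Nat.dvd_sub_one_of_dvd_mul_sub_one (Fact.out : p.Prime).one_lt.le hk hN hp1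

section StrongPseudoprime

variable {k p a s d t m : ℕ} [Fact p.Prime] [Fact (2 < k)] [Fact (2 < p)]

theorem PassesMillerRabin.orderOf_dvd (h : PassesMillerRabin (a : ZMod (k * p)) s d)
    (hpa : ¬p ∣ a) (hsd : k * p - 1 = 2 ^ s * d) (hd : Odd d) (hkm : k - 1 = 2 ^ t * m)
    (hm : Odd m) : orderOf (a : ZMod p) ∣ 2 ^ (orderOf (a : ZMod k)).factorization 2 * m := by
  have hk1 : orderOf (a : ZMod p) ∣ 2 ^ t * m :=
    hkm ▸ orderOf_dvd_sub_one_of_pow_mul_sub_one_eq_one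
      (one_le_two.trans (Fact.out : 2 < k).le) hpa (hsd ▸ h.pow_eq_one)
  refine Nat.dvd_pow_mul_of_factorization_le Nat.prime_two hm.pos.ne' hk1 ?_
  exact (h.factorization_orderOf_zmod_eq (dvd_mul_right k p) (dvd_mul_left p k) hd).le

theorem PassesMillerRabin.pow_eq_one_of_pow_eq_one (h : PassesMillerRabin (a : ZMod (k * p)) s d)
    (hpa : ¬p ∣ a) (hsd : k * p - 1 = 2 ^ s * d) (hd : Odd d) (hkm : k - 1 = 2 ^ t * m)
    (hm : Odd m) (hk : (a : ZMod k) ^ m = 1) : (a : ZMod p) ^ m = 1 := by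
  have := h.orderOf_dvd hpa hsd hd hkm hm
  rw [factorization_orderOf_of_pow_eq_one hm hk, pow_zero, one_mul] at this
  exact orderOf_dvd_iff_pow_eq_one.mp this

theorem PassesMillerRabin.pow_eq_neg_one_of_pow_eq_neg_one {j : ℕ}
    (h : PassesMillerRabin (a : ZMod (k * p)) s d) (hpa : ¬p ∣ a) (hsd : k * p - 1 = 2 ^ s * d)
    (hd : Odd d) (hkm : k - 1 = 2 ^ t * m) (hm : Odd m) (hk : (a : ZMod k) ^ (2 ^ j * m) = -1) :
    (a : ZMod p) ^ (2 ^ j * m) = -1 := by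
  have hvk := factorization_orderOf_of_pow_eq_neg_one ZMod.neg_one_ne_one hm hk
  have hdvd := h.orderOf_dvd hpa hsd hd hkm hm
  rw [hvk] at hdvd
  refine pow_eq_neg_one_of_factorization_orderOf hm hdvd ?_
  rw [h.factorization_orderOf_zmod_eq (dvd_mul_right k p) (dvd_mul_left p k) hd, hvk]

end StrongPseudoprime

theorem stmt_15 :
    Nat.gcd ((2 ^ 37780 + 1) % (5 ^ 9445 - 1)) (5 ^ 9445 - 1) = 151121 ∧
    ∀ p : ℕ, p.Prime → 151121 < p →
      ¬ (∀ a ∈ ({2, 3, 5} : Finset ℕ),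
          ∀ s d : ℕ, 151121 * p - 1 = 2 ^ s * d → Odd d →
            ((a : ZMod (151121 * p)) ^ d = 1 ∨
              ∃ k < s, (a : ZMod (151121 * p)) ^ (2 ^ k * d) = -1)) := by
  have hgcd : Nat.gcd ((2 ^ 37780 + 1) % (5 ^ 9445 - 1)) (5 ^ 9445 - 1) = 151121 := by
    decide +kernel
  refine ⟨hgcd, fun p hp hpk H => ?_⟩
  have : Fact p.Prime := ⟨hp⟩
  have : Fact (2 < p) := ⟨by omega⟩
  have : Fact (2 < 151121) := ⟨by norm_num⟩
  obtain ⟨s, d, hd, hsd⟩ := Nat.exists_eq_two_pow_mul_odd (n := 151121 * p - 1) (by omega)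
  have hkm : 151121 - 1 = 2 ^ 4 * 9445 := rfl
  have h5 : ((5 : ℕ) : ZMod p) ^ 9445 = 1 :=
    PassesMillerRabin.pow_eq_one_of_pow_eq_one (H 5 (by simp) s d hsd hd)
      (Nat.not_dvd_of_pos_of_lt (by norm_num) (by omega)) hsd hd hkm (by decide)
      (by rw [← Nat.cast_pow, ← ZMod.natCast_mod]; decide +kernel)
  have h2 : ((2 : ℕ) : ZMod p) ^ (2 ^ 2 * 9445) = -1 :=
    PassesMillerRabin.pow_eq_neg_one_of_pow_eq_neg_one (H 2 (by simp) s d hsd hd)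
      (Nat.not_dvd_of_pos_of_lt (by norm_num) (by omega)) hsd hd hkm (by decide)
      (by rw [← Nat.cast_pow, ← ZMod.natCast_mod]; decide +kernel)
  have hp5 : p ∣ 5 ^ 9445 - 1 := by
    rw [← ZMod.natCast_eq_zero_iff, Nat.cast_sub (one_le_pow₀ (by norm_num)), Nat.cast_pow, h5,
      Nat.cast_one, sub_self]
  have hp2 : p ∣ 2 ^ 37780 + 1 := by
    rw [← ZMod.natCast_eq_zero_iff, show 37780 = 2 ^ 2 * 9445 from rfl, Nat.cast_add,
      Nat.cast_pow, h2, Nat.cast_one, neg_add_cancel]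
  have hpk_dvd : p ∣ 151121 := hgcd ▸ Nat.dvd_gcd ((Nat.dvd_mod_iff hp5).mpr hp2) hp5
  exact absurd (Nat.le_of_dvd (by norm_num) hpk_dvd) (by omega)
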